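/- arXiv:2308.09625 — 2 statements merged into one kernel-verified Lean document; each statement's English description precedes it below -/
import Mathlib

section
/- Let G be a d-weighted reachability game and let ≲ be either the componentwise order ≤_C or the lexicographic order ≤_L on (ℕ ∪ {∞})^d. Let v ∉ F and let x ∈ I^{|V|}(v) with x ≠ (∞,…,∞). If x ∈ Iⁿ(v) for some n ∈ ℕ, then x ∈ I^ℓ(v) for every ℓ ≥ n. -/
open Classical

/-- Cost profiles: `d`-tuples over `ℕ ∪ {∞}`. -/
abbrev CostP (d : ℕ) := Fin d → ℕ∞

/-- The componentwise order `≤_C` on `(ℕ ∪ {∞})^d`. -/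
def leC {d : ℕ} (x y : CostP d) : Prop := x ≤ y

/-- The strict lexicographic order `<_L` on `(ℕ ∪ {∞})^d`. -/
def ltL {d : ℕ} (x y : CostP d) : Prop :=
  ∃ i, (∀ j, j < i → x j = y j) ∧ x i < y i

/-- The lexicographic order `≤_L` on `(ℕ ∪ {∞})^d`. -/
def leL {d : ℕ} (x y : CostP d) : Prop := x = y ∨ ltL x y

/-- Minimal elements of `X` with respect to an order `le`. -/
def minimalSet {α : Type*} (le : α → α → Prop) (X : Set α) : Set α :=
  { x | x ∈ X ∧ ∀ y ∈ X, le y x → y = x }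

/-- Upward closure of `X` with respect to an order `le`. -/
def upSet {α : Type*} (le : α → α → Prop) (X : Set α) : Set α :=
  { z | ∃ x ∈ X, le x z }

/-- Translation of a set of cost profiles by (the cast of) a tuple `c ∈ ℕ^d`. -/
def addW {d : ℕ} (X : Set (CostP d)) (c : Fin d → ℕ) : Set (CostP d) :=
  { z | ∃ x ∈ X, z = x + fun i => (c i : ℕ∞) }

/-- A `d`-weighted reachability game: a finite directed graph whose vertices are
partitioned into Player 1's vertices `V1` and Player 2's vertices (the complement),
an edge relation `E` such that every vertex has a successor, a `d`-dimensional
weight function `w` on edges, and a target set `F`. -/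
structure MWGame (V : Type*) (d : ℕ) where
  V1 : Set V
  E : V → V → Prop
  succ_nonempty : ∀ v, ∃ v', E v v'
  w : V → V → Fin d → ℕ
  F : Set V

namespace MWGame

variable {V : Type*} {d : ℕ}

/-- Strategies of Player 1: a choice of successor for every history
(represented as the pair (strict past, current vertex)), valid at Player 1's vertices. -/
def Strat1 (G : MWGame V d) :=
  { σ : List V → V → V // ∀ h u, u ∈ G.V1 → G.E u (σ h u) }

/-- Strategies of Player 2. -/
def Strat2 (G : MWGame V d) :=
  { σ : List V → V → V // ∀ h u, u ∉ G.V1 → G.E u (σ h u) }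

/-- The pair (strict past, current vertex) after `n` steps of the play consistent
with `σ₁` and `σ₂` from `v`. -/
noncomputable def outAux (G : MWGame V d) (σ₁ : G.Strat1) (σ₂ : G.Strat2) (v : V) :
    ℕ → List V × V
  | 0 => ([], v)
  | n + 1 =>
    let q := G.outAux σ₁ σ₂ v n
    (q.1 ++ [q.2], if q.2 ∈ G.V1 then σ₁.1 q.1 q.2 else σ₂.1 q.1 q.2)

/-- `Out(σ₁,σ₂,v)`: the unique play from `v` consistent with `σ₁` and `σ₂`. -/
noncomputable def out (G : MWGame V d) (σ₁ : G.Strat1) (σ₂ : G.Strat2) (v : V) (n : ℕ) : V :=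
  (G.outAux σ₁ σ₂ v n).2

/-- The cost profile of a play: the componentwise sum of weights up to the first
visit of the target set, and `(∞,…,∞)` if the target set is never visited. -/
noncomputable def cost (G : MWGame V d) (ρ : ℕ → V) : CostP d :=
  if h : ∃ ℓ, ρ ℓ ∈ G.F then
    fun i => ∑ n ∈ Finset.range (Nat.find h), (G.w (ρ n) (ρ (n + 1)) i : ℕ∞)
  else ⊤

/-- `Ensure^k(v)`: cost profiles that Player 1 can ensure from `v` within `k` steps. -/
def EnsureK (G : MWGame V d) (le : CostP d → CostP d → Prop) (k : ℕ) (v : V) :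
    Set (CostP d) :=
  { x | ∃ σ₁ : G.Strat1, ∀ σ₂ : G.Strat2,
      le (G.cost (G.out σ₁ σ₂ v)) x ∧
      ∀ h : (∃ ℓ, G.out σ₁ σ₂ v ℓ ∈ G.F), Nat.find h ≤ k }

/-- `Ensure(v)`: cost profiles that Player 1 can ensure from `v`. -/
def Ensure (G : MWGame V d) (le : CostP d → CostP d → Prop) (v : V) : Set (CostP d) :=
  { x | ∃ σ₁ : G.Strat1, ∀ σ₂ : G.Strat2, le (G.cost (G.out σ₁ σ₂ v)) x }

/-- The sets `Iᵏ(v)` computed by the fixpoint algorithm, relative to the order `le`. -/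
noncomputable def Iset (G : MWGame V d) (le : CostP d → CostP d → Prop) :
    ℕ → V → Set (CostP d)
  | 0, v => if v ∈ G.F then {0} else {⊤}
  | k + 1, v =>
    if v ∈ G.F then {0}
    else if v ∈ G.V1 then
      minimalSet le (⋃ v' ∈ { u | G.E v u }, addW (upSet le (G.Iset le k v')) (G.w v v'))
    else
      minimalSet le (⋂ v' ∈ { u | G.E v u }, addW (upSet le (G.Iset le k v')) (G.w v v'))

end MWGame


/-!
Write `Uᵏ(v) = ↑Iᵏ(v)`. These sets grow with `k`, and off the target `Iᵏ⁺¹(v)` is the set of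
minimal elements of a set `cpre Uᵏ v` that depends monotonically on `Uᵏ`.

The crux is that `Uᵏ(v) ⊆ U^{|V|}(v)` for every `k`. Suppose `t ∈ Uᵏ⁺¹(v) \ Uᵏ(v)`. Unfolding
one round, and since weights are nonnegative, there are a successor `v'` and `z ≲ t` with
`z ∈ Uᵏ(v') \ Uᵏ⁻¹(v')`. By upward closure
`{u | z ∈ Uᵏ(u)} ⊆ {u | t ∈ Uᵏ(u)} ⊊ {u | t ∈ Uᵏ⁺¹(u)}`, the last inclusion being strict at `v`.
By induction, `t ∈ Uᵏ⁺¹(u)` for at least `k + 1` vertices `u`, so `k + 1 ≤ |V|`.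

Now let `x ∈ Iⁿ(v)` be minimal in round `|V|`, and let `y ≲ x` arise in a later round `l`.
Then `y ∈ U^{|V|}(v)`, so `y` lies above an element of `I^{|V|}(v)`, which must be `x`.
Hence `x` is still minimal in round `l`.
-/

section Stabilization

open Finset

variable {V C : Type*} [Fintype V] {r : C → C → Prop} {U : ℕ → V → Set C}

theorem succ_le_card_of_mem_succ_of_notMem
    (hup : ∀ k v {s t}, r s t → s ∈ U k v → t ∈ U k v)
    (hmono : ∀ v, Monotone (U · v))
    (hdesc : ∀ k v t, t ∈ U (k + 2) v → t ∉ U (k + 1) v →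
      ∃ v' s, r s t ∧ s ∈ U (k + 1) v' ∧ s ∉ U k v') :
    ∀ k v t, t ∈ U (k + 1) v → t ∉ U k v → k + 1 ≤ #{u | t ∈ U (k + 1) u} := by
  intro k
  induction k with
  | zero =>
    intro v t ht _
    exact card_pos.2 ⟨v, by simpa using ht⟩
  | succ k ih =>
    intro v t ht hnt
    obtain ⟨v', s, hst, hs, hns⟩ := hdesc k v t ht hnt
    have hsub : ({u | s ∈ U (k + 1) u} : Finset V) ⊆ ({u | t ∈ U (k + 1) u} : Finset V) :=
      monotone_filter_right _ fun u _ => hup (k + 1) u hst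
    have hssub : ({u | t ∈ U (k + 1) u} : Finset V) ⊂ ({u | t ∈ U (k + 2) u} : Finset V) :=
      (ssubset_iff_of_subset (monotone_filter_right _ fun u _ => @hmono u _ _ (k + 1).le_succ t)).2
        ⟨v, by simpa using ht, by simpa using hnt⟩
    calc k + 1 + 1 ≤ #{u | s ∈ U (k + 1) u} + 1 := by grw [ih v' s hs hns]
      _ ≤ #{u | t ∈ U (k + 1) u} + 1 := by grw [card_le_card hsub]
      _ ≤ #{u | t ∈ U (k + 2) u} := card_lt_card hssub

theorem subset_card_of_descent
    (hup : ∀ k v {s t}, r s t → s ∈ U k v → t ∈ U k v)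
    (hmono : ∀ v, Monotone (U · v))
    (hdesc : ∀ k v t, t ∈ U (k + 2) v → t ∉ U (k + 1) v →
      ∃ v' s, r s t ∧ s ∈ U (k + 1) v' ∧ s ∉ U k v') (k : ℕ) (v : V) :
    U k v ⊆ U (Fintype.card V) v := by
  induction k with
  | zero => exact hmono v (Nat.zero_le _)
  | succ k ih =>
    intro t ht
    by_cases htk : t ∈ U k v
    · exact ih htk
    · have hk := succ_le_card_of_mem_succ_of_notMem hup hmono hdesc k v t ht htk
      exact hmono v (hk.trans (card_le_univ _)) ht

end Stabilization

structure IsCostOrder {d : ℕ} (le : CostP d → CostP d → Prop) : Prop where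
  refl : ∀ x, le x x
  trans : ∀ {x y z}, le x y → le y z → le x z
  antisymm : ∀ {x y}, le x y → le y x → x = y
  of_le : ∀ {x y : CostP d}, x ≤ y → le x y
  wf : WellFounded fun x y => le x y ∧ x ≠ y

theorem upSet_mono {α : Type*} {le : α → α → Prop} {X Y : Set α} (h : X ⊆ Y) :
    upSet le X ⊆ upSet le Y := fun _ ⟨x, hx, hxz⟩ => ⟨x, h hx, hxz⟩

section CostOrder

variable {d : ℕ}

theorem leL_iff_toLex_le {x y : CostP d} : leL x y ↔ toLex x ≤ toLex y := by
  rw [le_iff_eq_or_lt, toLex_inj]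
  rfl

theorem isCostOrder_leC : IsCostOrder (leC (d := d)) where
  refl := le_refl
  trans := le_trans
  antisymm := le_antisymm
  of_le := id
  wf := (wellFounded_lt (α := CostP d)).mono fun _ _ h => lt_of_le_of_ne h.1 h.2

theorem isCostOrder_leL : IsCostOrder (leL (d := d)) where
  refl _ := Or.inl rfl
  trans h₁ h₂ := leL_iff_toLex_le.2 ((leL_iff_toLex_le.1 h₁).trans (leL_iff_toLex_le.1 h₂))
  antisymm h₁ h₂ := toLex_inj.1 ((leL_iff_toLex_le.1 h₁).antisymm (leL_iff_toLex_le.1 h₂))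
  of_le h := leL_iff_toLex_le.2 (Pi.toLex_monotone h)
  wf := (InvImage.wf toLex wellFounded_lt).mono fun _ _ h => h.1.resolve_left h.2

namespace IsCostOrder

variable {le : CostP d → CostP d → Prop}

theorem mem_upSet_of_le (hle : IsCostOrder le) {X : Set (CostP d)} {s t : CostP d}
    (hst : le s t) (hs : s ∈ upSet le X) : t ∈ upSet le X :=
  let ⟨x, hx, hxs⟩ := hs
  ⟨x, hx, hle.trans hxs hst⟩

theorem subset_upSet (hle : IsCostOrder le) (X : Set (CostP d)) : X ⊆ upSet le X :=
  fun x hx => ⟨x, hx, hle.refl x⟩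

theorem exists_mem_minimalSet_le (hle : IsCostOrder le) {X : Set (CostP d)} {x : CostP d}
    (hx : x ∈ X) : ∃ m ∈ minimalSet le X, le m x := by
  obtain ⟨m, ⟨hmX, hmx⟩, hmin⟩ := hle.wf.has_min {y ∈ X | le y x} ⟨x, hx, hle.refl x⟩
  refine ⟨m, ⟨hmX, fun y hyX hym => ?_⟩, hmx⟩
  by_contra hne
  exact hmin y ⟨hyX, hle.trans hym hmx⟩ ⟨hym, hne⟩

theorem upSet_minimalSet (hle : IsCostOrder le) (X : Set (CostP d)) :
    upSet le (minimalSet le X) = upSet le X := by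
  refine (upSet_mono fun _ hx => hx.1).antisymm fun z ⟨x, hx, hxz⟩ => ?_
  obtain ⟨m, hm, hmx⟩ := hle.exists_mem_minimalSet_le hx
  exact ⟨m, hm, hle.trans hmx hxz⟩

theorem mem_minimalSet_of_subset_upSet (hle : IsCostOrder le) {X Y : Set (CostP d)}
    {x : CostP d} (hx : x ∈ minimalSet le X) (hxY : x ∈ Y) (hYX : Y ⊆ upSet le X) :
    x ∈ minimalSet le Y := by
  refine ⟨hxY, fun y hy hyx => ?_⟩
  obtain ⟨z, hz, hzy⟩ := hYX hy
  have hzx : z = x := hx.2 z hz (hle.trans hzy hyx)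
  exact hle.antisymm hyx (hzx ▸ hzy)

end IsCostOrder

end CostOrder

namespace MWGame

variable {V : Type*} {d : ℕ} (G : MWGame V d)

/-- The controllable-predecessor operator, lifted to cost sets. -/
def cpre (S : V → Set (CostP d)) (v : V) : Set (CostP d) :=
  if v ∈ G.V1 then ⋃ v' ∈ {u | G.E v u}, addW (S v') (G.w v v')
  else ⋂ v' ∈ {u | G.E v u}, addW (S v') (G.w v v')

variable {G}

theorem cpre_mono {S T : V → Set (CostP d)} (h : ∀ v, S v ⊆ T v) (v : V) :
    G.cpre S v ⊆ G.cpre T v := by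
  have haddW : ∀ v', addW (S v') (G.w v v') ⊆ addW (T v') (G.w v v') :=
    fun v' _ ⟨z, hz, hzt⟩ => ⟨z, h v' hz, hzt⟩
  unfold cpre
  split_ifs
  · exact Set.biUnion_mono subset_rfl fun v' _ => haddW v'
  · exact Set.biInter_mono subset_rfl fun v' _ => haddW v'

theorem mem_cpre_inter_Iic {S : V → Set (CostP d)} {v : V} {t : CostP d}
    (ht : t ∈ G.cpre S v) : t ∈ G.cpre (fun v' => S v' ∩ Set.Iic t) v := by
  have haddW :
      ∀ v', t ∈ addW (S v') (G.w v v') → t ∈ addW (S v' ∩ Set.Iic t) (G.w v v') :=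
    fun _ ⟨z, hz, hzt⟩ => ⟨z, ⟨hz, by rw [Set.mem_Iic, hzt]; exact le_self_add⟩, hzt⟩
  unfold cpre at ht ⊢
  split_ifs at ht ⊢
  · obtain ⟨v', hv', ht'⟩ := Set.mem_iUnion₂.1 ht
    exact Set.mem_iUnion₂.2 ⟨v', hv', haddW v' ht'⟩
  · exact Set.mem_iInter₂.2 fun v' hv' => haddW v' (Set.mem_iInter₂.1 ht v' hv')

theorem top_mem_cpre {S : V → Set (CostP d)} (hS : ∀ v, ⊤ ∈ S v) (v : V) :
    ⊤ ∈ G.cpre S v := by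
  have haddW : ∀ v', (⊤ : CostP d) ∈ addW (S v') (G.w v v') :=
    fun v' => ⟨⊤, hS v', funext fun _ => (top_add _).symm⟩
  unfold cpre
  split_ifs
  · obtain ⟨v', hv'⟩ := G.succ_nonempty v
    exact Set.mem_iUnion₂.2 ⟨v', hv', haddW v'⟩
  · exact Set.mem_iInter₂.2 fun v' _ => haddW v'

variable {le : CostP d → CostP d → Prop}

theorem Iset_of_mem_F {v : V} (hv : v ∈ G.F) (k : ℕ) : G.Iset le k v = {0} := by
  cases k <;> simp [Iset, hv]

theorem Iset_succ {v : V} (hv : v ∉ G.F) (k : ℕ) :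
    G.Iset le (k + 1) v = minimalSet le (G.cpre (fun v' => upSet le (G.Iset le k v')) v) := by
  simp only [Iset, cpre, hv, if_false]
  split_ifs <;> rfl

theorem upSet_Iset_succ (hle : IsCostOrder le) {v : V} (hv : v ∉ G.F) (k : ℕ) :
    upSet le (G.Iset le (k + 1) v) =
      upSet le (G.cpre (fun v' => upSet le (G.Iset le k v')) v) := by
  rw [Iset_succ hv, hle.upSet_minimalSet]

theorem upSet_Iset_of_mem_F (hle : IsCostOrder le) {v : V} (hv : v ∈ G.F) (k : ℕ) :
    upSet le (G.Iset le k v) = Set.univ := by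
  rw [Iset_of_mem_F hv]
  exact Set.eq_univ_of_forall fun y => ⟨0, rfl, hle.of_le zero_le⟩

theorem top_mem_upSet_Iset (hle : IsCostOrder le) (k : ℕ) (v : V) :
    ⊤ ∈ upSet le (G.Iset le k v) := by
  induction k generalizing v with
  | zero =>
    by_cases hv : v ∈ G.F
    · simp [upSet_Iset_of_mem_F hle hv]
    · exact ⟨⊤, by simp [Iset, hv], hle.refl ⊤⟩
  | succ k ih =>
    by_cases hv : v ∈ G.F
    · simp [upSet_Iset_of_mem_F hle hv]
    · rw [upSet_Iset_succ hle hv]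
      exact hle.subset_upSet _ (top_mem_cpre ih v)

theorem upSet_Iset_subset_succ (hle : IsCostOrder le) (k : ℕ) (v : V) :
    upSet le (G.Iset le k v) ⊆ upSet le (G.Iset le (k + 1) v) := by
  induction k generalizing v with
  | zero =>
    by_cases hv : v ∈ G.F
    · simp [upSet_Iset_of_mem_F hle hv]
    · rintro y ⟨_, hx, hy⟩
      simp only [Iset, hv, if_false, Set.mem_singleton_iff] at hx
      exact hle.mem_upSet_of_le (hx ▸ hy) (top_mem_upSet_Iset hle 1 v)
  | succ k ih =>
    by_cases hv : v ∈ G.F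
    · simp [upSet_Iset_of_mem_F hle hv]
    · rw [upSet_Iset_succ hle hv, upSet_Iset_succ hle hv]
      exact upSet_mono (cpre_mono ih v)

theorem upSet_Iset_monotone (hle : IsCostOrder le) (v : V) :
    Monotone fun k => upSet le (G.Iset le k v) :=
  monotone_nat_of_le_succ fun k => upSet_Iset_subset_succ hle k v

theorem exists_descent (hle : IsCostOrder le) {k : ℕ} {v : V} {t : CostP d}
    (ht : t ∈ upSet le (G.Iset le (k + 2) v)) (hnt : t ∉ upSet le (G.Iset le (k + 1) v)) :
    ∃ v' z, le z t ∧
      z ∈ upSet le (G.Iset le (k + 1) v') ∧ z ∉ upSet le (G.Iset le k v') := by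
  have hv : v ∉ G.F := fun hv => hnt (by simp [upSet_Iset_of_mem_F hle hv])
  rw [upSet_Iset_succ hle hv] at ht hnt
  obtain ⟨t₀, ht₀, ht₀t⟩ := ht
  by_contra! hz
  have hcomp :
      ∀ v', upSet le (G.Iset le (k + 1) v') ∩ Set.Iic t₀ ⊆ upSet le (G.Iset le k v') :=
    fun v' z ⟨hz₁, hz₂⟩ => hz v' z (hle.trans (hle.of_le hz₂) ht₀t) hz₁
  exact hnt ⟨t₀, cpre_mono hcomp v (mem_cpre_inter_Iic ht₀), ht₀t⟩

theorem upSet_Iset_subset_card [Fintype V] (hle : IsCostOrder le) (k : ℕ) (v : V) :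
    upSet le (G.Iset le k v) ⊆ upSet le (G.Iset le (Fintype.card V) v) :=
  subset_card_of_descent (fun _ _ _ _ => hle.mem_upSet_of_le) (upSet_Iset_monotone hle)
    (fun _ _ _ => exists_descent hle) k v

end MWGame

theorem stmt14_general {V : Type*} [Fintype V] {d : ℕ} (G : MWGame V d)
    (le : CostP d → CostP d → Prop) (hle : le = leC ∨ le = leL)
    (v : V) (hvF : v ∉ G.F) (x : CostP d)
    (hx : x ∈ G.Iset le (Fintype.card V) v) (hxne : x ≠ ⊤)
    (n : ℕ) (hn : x ∈ G.Iset le n v) :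
    ∀ l, n ≤ l → x ∈ G.Iset le l v := by
  have hord : IsCostOrder le := by
    rcases hle with rfl | rfl
    exacts [isCostOrder_leC, isCostOrder_leL]
  intro l hnl
  obtain ⟨n, rfl⟩ : ∃ m, n = m + 1 := Nat.exists_eq_succ_of_ne_zero fun hn0 => by
    simp [hn0, MWGame.Iset, hvF, hxne] at hn
  obtain ⟨l, rfl⟩ : ∃ m, l = m + 1 := ⟨l - 1, by omega⟩
  obtain ⟨N, hN⟩ : ∃ N, Fintype.card V = N + 1 :=
    Nat.exists_eq_succ_of_ne_zero (Fintype.card_pos_iff.2 ⟨v⟩).ne'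
  rw [hN, MWGame.Iset_succ hvF] at hx
  rw [MWGame.Iset_succ hvF] at hn ⊢
  refine hord.mem_minimalSet_of_subset_upSet hx
    (MWGame.cpre_mono (fun v' => MWGame.upSet_Iset_monotone hord v' (by omega)) v hn.1) ?_
  calc G.cpre (fun v' => upSet le (G.Iset le l v')) v
      ⊆ upSet le (G.cpre (fun v' => upSet le (G.Iset le l v')) v) := hord.subset_upSet _
    _ = upSet le (G.Iset le (l + 1) v) := (MWGame.upSet_Iset_succ hord hvF l).symm
    _ ⊆ upSet le (G.Iset le (N + 1) v) := hN ▸ MWGame.upSet_Iset_subset_card hord (l + 1) v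
    _ = upSet le (G.cpre (fun v' => upSet le (G.Iset le N v')) v) :=
      MWGame.upSet_Iset_succ hord hvF N

/-- Monotonicity at the fixpoint: for `v ∉ F` and a finite
`x ∈ I^{|V|}(v)`, if `x ∈ Iⁿ(v)` then `x ∈ I^l(v)` for every `l ≥ n`. -/
theorem stmt14 {V : Type*} [Fintype V] {d : ℕ} (hd : 1 ≤ d) (G : MWGame V d)
    (le : CostP d → CostP d → Prop) (hle : le = leC ∨ le = leL)
    (v : V) (hvF : v ∉ G.F) (x : CostP d)
    (hx : x ∈ G.Iset le (Fintype.card V) v) (hxne : x ≠ ⊤)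
    (n : ℕ) (hn : x ∈ G.Iset le n v) :
    ∀ l, n ≤ l → x ∈ G.Iset le l v :=
  stmt14_general G le hle v hvF x hx hxne n hn
end

section
/- Let n be an odd natural number, let a₁, …, aₙ ∈ ℕ and let T ∈ ℕ with T ≤ Σ_{i=1}^n aᵢ. Let Ψ be the statement ∃x₁ ∈ {0,1} ∀x₂ ∈ {0,1} ∃x₃ ∈ {0,1} … ∃xₙ ∈ {0,1} : Σ_{i=1}^n xᵢ·aᵢ = T (the quantifier on x_k is existential for odd k and universal for even k). Consider the 2-weighted reachability game whose vertices are x₁, …, xₙ, x₁⁰, x₁¹, …, xₙ⁰, xₙ¹ and y, where x_k belongs to Player 1 for odd k and to Player 2 for even k, and all other vertices belong to Player 1; whose edges are (x_k, x_k¹) of weight (a_k, 0) and (x_k, x_k⁰) of weight (0, a_k) for 1 ≤ k ≤ n, (x_k¹, x_{k+1}) and (x_k⁰, x_{k+1}) of weight (0,0) for 1 ≤ k ≤ n−1, and (xₙ¹, y), (xₙ⁰, y) and the self-loop (y, y), all of weight (0,0); and whose target set is {y}. Then Ψ is true if and only if there exists a strategy σ₁ of Player 1 from x₁ such that Cost(Out(σ₁,σ₂,x₁))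 ≤_C (T, Σ_{i=1}^n aᵢ − T) for every strategy σ₂ of Player 2. -/
/-!
Every play from `x₁` runs through `x₁, x₁^{b₁}, x₂, x₂^{b₂}, …, xₙ^{bₙ}` and then stays in `y`,
so its cost is `(Σ bᵢaᵢ, Σ (1 - bᵢ)aᵢ)`. The two components add up to `Σ aᵢ`, hence the cost is
`≤_C (T, Σ aᵢ - T)` iff `Σ bᵢaᵢ = T`. The game is therefore the evaluation game of `Ψ`: Player 1
sets the existential bits knowing the earlier ones, Player 2 the universal ones. A winning strategy
of Player 1 amounts to a choice function for the existential bits along which every completion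
satisfies the sum, and such a function exists iff `Ψ` holds, by induction on the quantifier prefix.
-/

open Classical

/-- Vertices of the game used in the reduction from Quantified Subset-Sum:
`var k` is the vertex `x_{k+1}`, `val k b` is the vertex `x_{k+1}^b`, and
`tgt` is the target vertex `y` (indices are 0-based). -/
inductive QV (n : ℕ) where
  | var : Fin n → QV n
  | val : Fin n → Bool → QV n
  | tgt : QV n

/-- The 2-weighted reachability game of the reduction: `var k` belongs to Player 1
iff `k` is even (i.e. the 1-based variable `x_{k+1}` is existentially quantified),
edges `var k → val k b` carry weight `(aₖ, 0)` for `b = 1` and `(0, aₖ)` for `b = 0`,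
all other edges carry weight `(0,0)`, and the target set is `{y}`. -/
def qGame (n : ℕ) (a : ℕ → ℕ) : MWGame (QV n) 2 where
  V1 := { u | match u with
              | .var k => (k : ℕ) % 2 = 0
              | _ => True }
  E := fun u z => match u, z with
    | .var k, .val k' _ => k' = k
    | .val k _, .var k' => (k' : ℕ) = (k : ℕ) + 1
    | .val k _, .tgt => (k : ℕ) + 1 = n
    | .tgt, .tgt => True
    | _, _ => False
  succ_nonempty := by
    intro u
    match u with
    | .var k => exact ⟨.val k true, rfl⟩
    | .val k b =>
      by_cases h : (k : ℕ) + 1 = n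
      · exact ⟨.tgt, h⟩
      · exact ⟨.var ⟨(k : ℕ) + 1, lt_of_le_of_ne k.isLt h⟩, rfl⟩
    | .tgt => exact ⟨.tgt, trivial⟩
  w := fun u z i => match u, z with
    | .var k, .val k' b =>
      if k' = k then
        (if b then (if (i : ℕ) = 0 then a k else 0) else (if (i : ℕ) = 0 then 0 else a k))
      else 0
    | _, _ => 0
  F := { u | u = .tgt }

/-- `qss a T n m s` expresses the alternating quantified statement
`Q x_{n-m+1} ∈ {0,1} … ∃ xₙ ∈ {0,1}, s + Σ xᵢ aᵢ = T` over the last `m` variables,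
where the quantifier on the (1-based) variable `x_{k+1}` is existential iff `k` is even.
The formula `Ψ` of the Quantified Subset-Sum problem is `qss a T n n 0`. -/
def qss (a : ℕ → ℕ) (T n : ℕ) : ℕ → ℕ → Prop
  | 0, s => s = T
  | m + 1, s =>
    if (n - (m + 1)) % 2 = 0 then
      ∃ b : Bool, qss a T n m (s + if b then a (n - (m + 1)) else 0)
    else
      ∀ b : Bool, qss a T n m (s + if b then a (n - (m + 1)) else 0)


namespace MWGame

variable {V : Type*} {d : ℕ} {G : MWGame V d}

theorem outAux_eq (σ₁ : G.Strat1) (σ₂ : G.Strat2) (v : V) (m : ℕ) :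
    G.outAux σ₁ σ₂ v m = ((List.range m).map (G.out σ₁ σ₂ v), G.out σ₁ σ₂ v m) := by
  induction m with
  | zero => rfl
  | succ m ih =>
    refine Prod.ext ?_ rfl
    show (G.outAux σ₁ σ₂ v m).1 ++ [(G.outAux σ₁ σ₂ v m).2] = _
    rw [ih, List.range_succ, List.map_append, List.map_singleton]

theorem out_succ (σ₁ : G.Strat1) (σ₂ : G.Strat2) (v : V) (m : ℕ) :
    G.out σ₁ σ₂ v (m + 1) =
      if G.out σ₁ σ₂ v m ∈ G.V1 then σ₁.1 ((List.range m).map (G.out σ₁ σ₂ v)) (G.out σ₁ σ₂ v m)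
      else σ₂.1 ((List.range m).map (G.out σ₁ σ₂ v)) (G.out σ₁ σ₂ v m) := by
  conv_lhs => rw [out, outAux, outAux_eq]

theorem out_edge (σ₁ : G.Strat1) (σ₂ : G.Strat2) (v : V) (m : ℕ) :
    G.E (G.out σ₁ σ₂ v m) (G.out σ₁ σ₂ v (m + 1)) := by
  rw [out_succ]
  split_ifs with h
  · exact σ₁.2 _ _ h
  · exact σ₂.2 _ _ h

noncomputable def Strat1.ofFun (G : MWGame V d) (f : List V → V → V) : G.Strat1 :=
  ⟨fun l u => if G.E u (f l u) then f l u else (G.succ_nonempty u).choose, fun l u _ => by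
    dsimp only
    split_ifs with h
    exacts [h, (G.succ_nonempty u).choose_spec]⟩

noncomputable def Strat2.ofFun (G : MWGame V d) (f : List V → V → V) : G.Strat2 :=
  ⟨fun l u => if G.E u (f l u) then f l u else (G.succ_nonempty u).choose, fun l u _ => by
    dsimp only
    split_ifs with h
    exacts [h, (G.succ_nonempty u).choose_spec]⟩

theorem Strat1.ofFun_apply {f : List V → V → V} {l : List V} {u : V} (h : G.E u (f l u)) :
    (Strat1.ofFun G f).1 l u = f l u :=
  if_pos h

theorem Strat2.ofFun_apply {f : List V → V → V} {l : List V} {u : V} (h : G.E u (f l u)) :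
    (Strat2.ofFun G f).1 l u = f l u :=
  if_pos h

end MWGame

theorem Finset.sum_range_two_mul {M : Type*} [AddCommMonoid M] (f : ℕ → M) (N : ℕ) :
    ∑ m ∈ Finset.range (2 * N), f m = ∑ k ∈ Finset.range N, (f (2 * k) + f (2 * k + 1)) := by
  induction N with
  | zero => simp
  | succ N ih =>
    rw [show 2 * (N + 1) = 2 * N + 1 + 1 by ring, Finset.sum_range_succ, Finset.sum_range_succ,
      Finset.sum_range_succ, ih, add_assoc]

section BitGame

variable {a : ℕ → ℕ} {T n : ℕ}

def chosenSum (a : ℕ → ℕ) (c : ℕ → Bool) (k : ℕ) : ℕ :=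
  ∑ i ∈ Finset.range k, if c i then a i else 0

theorem chosenSum_congr {c c' : ℕ → Bool} {k : ℕ} (h : ∀ i < k, c i = c' i) :
    chosenSum a c k = chosenSum a c' k :=
  Finset.sum_congr rfl fun i hi => by rw [h i (Finset.mem_range.mp hi)]

theorem chosenSum_succ (c : ℕ → Bool) (k : ℕ) :
    chosenSum a c (k + 1) = chosenSum a c k + if c k then a k else 0 :=
  Finset.sum_range_succ _ _

theorem chosenSum_update (c : ℕ → Bool) (k : ℕ) (b : Bool) :
    chosenSum a (Function.update c k b) (k + 1) = chosenSum a c k + if b then a k else 0 := by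
  rw [chosenSum_succ, Function.update_self,
    chosenSum_congr fun i hi => Function.update_of_ne (Nat.ne_of_lt hi) _ _]

theorem chosenSum_add_chosenSum_not (c : ℕ → Bool) (k : ℕ) :
    chosenSum a c k + chosenSum a (fun i => !c i) k = ∑ i ∈ Finset.range k, a i := by
  rw [chosenSum, chosenSum, ← Finset.sum_add_distrib]
  exact Finset.sum_congr rfl fun i _ => by cases c i <;> simp

def Follows (g : List Bool → Bool) (c : ℕ → Bool) (k : ℕ) : Prop :=
  ∀ i < k, i % 2 = 0 → c i = g ((List.range i).map c)

theorem map_range_update {c : ℕ → Bool} {k i : ℕ} (b : Bool) (hi : i ≤ k) :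
    (List.range i).map (Function.update c k b) = (List.range i).map c :=
  List.map_congr_left fun j hj => Function.update_of_ne (by simp at hj; omega) _ _

theorem Follows.mono {g : List Bool → Bool} {c : ℕ → Bool} {k l : ℕ} (hc : Follows g c l)
    (hkl : k ≤ l) : Follows g c k :=
  fun i hi => hc i (by omega)

theorem Follows.update {g : List Bool → Bool} {c : ℕ → Bool} {k : ℕ} {b : Bool}
    (hc : Follows g c k) (hb : k % 2 = 0 → b = g ((List.range k).map c)) :
    Follows g (Function.update c k b) (k + 1) := by
  intro i hi he
  rw [map_range_update b (by omega)]
  rcases Nat.lt_succ_iff_lt_or_eq.mp hi with hi | rfl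
  · rw [Function.update_of_ne (by omega)]
    exact hc i hi he
  · rw [Function.update_self]
    exact hb he

theorem qss_of_forall_follows {g : List Bool → Bool}
    (hg : ∀ c, Follows g c n → chosenSum a c n = T) :
    ∀ m ≤ n, ∀ c, Follows g c (n - m) → qss a T n m (chosenSum a c (n - m)) := by
  intro m
  induction m with
  | zero => exact fun _ c hc => hg c hc
  | succ m ih =>
    intro hm c hc
    have hk : n - m = n - (m + 1) + 1 := by omega
    have step : ∀ b, ((n - (m + 1)) % 2 = 0 → b = g ((List.range (n - (m + 1))).map c)) →
        qss a T n m (chosenSum a c (n - (m + 1)) + if b then a (n - (m + 1)) else 0) := by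
      intro b hb
      have := ih (by omega) _ (hk ▸ hc.update hb)
      rwa [hk, chosenSum_update] at this
    rw [qss]
    split_ifs with he
    · exact ⟨_, step _ fun _ => rfl⟩
    · exact fun b => step b fun h => absurd h he

theorem Bool.of_exists {p : Bool → Prop} (h : ∃ b, p b) : p (decide (p true)) := by
  by_cases ht : p true
  · simp [ht]
  · obtain ⟨b, hb⟩ := h
    cases b <;> simp_all

/-- If the existential bit can be chosen at all, `true` is chosen exactly when it works. -/
noncomputable def qssStrategy (a : ℕ → ℕ) (T n : ℕ) (L : List Bool) : Bool :=
  decide (qss a T n (n - (L.length + 1))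
    (chosenSum a (fun j => L.getD j false) L.length + a L.length))

theorem qssStrategy_map_range (c : ℕ → Bool) (k : ℕ) :
    qssStrategy a T n ((List.range k).map c) =
      decide (qss a T n (n - (k + 1)) (chosenSum a c k + a k)) := by
  have hc : chosenSum a (fun j => ((List.range k).map c).getD j false) k = chosenSum a c k :=
    chosenSum_congr fun i hi => by simp [hi]
  simp only [qssStrategy, List.length_map, List.length_range, hc]

theorem qss_of_follows_qssStrategy (hq : qss a T n n 0) :
    ∀ k ≤ n, ∀ c, Follows (qssStrategy a T n) c k → qss a T n (n - k) (chosenSum a c k) := by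
  intro k
  induction k with
  | zero => exact fun _ _ _ => by simpa [chosenSum] using hq
  | succ k ih =>
    intro hk c hc
    have hq' := ih (by omega) c (hc.mono (by omega))
    rw [show n - k = n - (k + 1) + 1 by omega, qss, show n - (n - (k + 1) + 1) = k by omega]
      at hq'
    rw [chosenSum_succ]
    split_ifs at hq' with he
    · obtain ⟨b, hb⟩ := hq'
      rw [hc k (by omega) he, qssStrategy_map_range]
      simpa using Bool.of_exists
        (p := fun b => qss a T n (n - (k + 1)) (chosenSum a c k + if b then a k else 0)) ⟨b, hb⟩
    · exact hq' _

theorem qss_iff_exists_forall_follows :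
    qss a T n n 0 ↔ ∃ g : List Bool → Bool, ∀ c, Follows g c n → chosenSum a c n = T := by
  constructor
  · intro hq
    refine ⟨qssStrategy a T n, fun c hc => ?_⟩
    have := qss_of_follows_qssStrategy hq n le_rfl c hc
    rwa [Nat.sub_self] at this
  · rintro ⟨g, hg⟩
    simpa [chosenSum] using
      qss_of_forall_follows hg n le_rfl (fun _ => false) fun i hi => by omega

end BitGame

namespace QV

variable {n : ℕ}

def bit : QV n → Bool
  | .val _ b => b
  | _ => false

def move (b : Fin n → Bool) : QV n → QV n
  | .var k => .val k (b k)
  | u => u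

end QV

section QGame

open MWGame

variable {n : ℕ} {a : ℕ → ℕ}

/-- The play `x₁ x₁^{c 0} x₂ x₂^{c 1} … xₙ xₙ^{c (n-1)} y y …`. -/
def qPlay (n : ℕ) (c : ℕ → Bool) (m : ℕ) : QV n :=
  if h : m / 2 < n then
    if m % 2 = 0 then .var ⟨m / 2, h⟩ else .val ⟨m / 2, h⟩ (c (m / 2))
  else .tgt

theorem qPlay_two_mul (c : ℕ → Bool) {k : ℕ} (hk : k < n) :
    qPlay n c (2 * k) = .var ⟨k, hk⟩ := by
  simp [qPlay, hk]

theorem qPlay_two_mul_add_one (c : ℕ → Bool) {k : ℕ} (hk : k < n) :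
    qPlay n c (2 * k + 1) = .val ⟨k, hk⟩ (c k) := by
  have h : (2 * k + 1) / 2 = k := by omega
  simp [qPlay, h, hk]

theorem qPlay_eq_tgt_iff (c : ℕ → Bool) (m : ℕ) : qPlay n c m = .tgt ↔ 2 * n ≤ m := by
  unfold qPlay
  split_ifs <;> simp <;> omega

theorem qPlay_congr {c c' : ℕ → Bool} (h : ∀ i < n, c i = c' i) : qPlay n c = qPlay n c' := by
  funext m
  by_cases hm : m / 2 < n
  · simp only [qPlay, dif_pos hm, h _ hm]
  · simp only [qPlay, dif_neg hm]

def qHist (n : ℕ) (c : ℕ → Bool) (k : ℕ) : List (QV n) :=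
  (List.range (2 * k)).map (qPlay n c)

theorem qHist_congr {c c' : ℕ → Bool} {k : ℕ} (h : ∀ i < k, c i = c' i) :
    qHist n c k = qHist n c' k := by
  refine List.map_congr_left fun m hm => ?_
  have hm : m / 2 < k := by simp at hm; omega
  unfold qPlay
  split_ifs <;> simp [h _ hm]

def histBits (l : List (QV n)) (k : ℕ) : List Bool :=
  (List.range k).map fun j => (l.getD (2 * j + 1) .tgt).bit

theorem histBits_qHist (c : ℕ → Bool) {k : ℕ} (hk : k ≤ n) :
    histBits (qHist n c k) k = (List.range k).map c := by
  refine List.map_congr_left fun j hj => ?_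
  have hj : j < k := List.mem_range.mp hj
  simp [qHist, show 2 * j + 1 < 2 * k by omega, qPlay_two_mul_add_one c (hj.trans_le hk), QV.bit]

theorem qGame_var_mem_V1 {k : Fin n} : QV.var k ∈ (qGame n a).V1 ↔ (k : ℕ) % 2 = 0 := Iff.rfl

theorem qGame_E_var {k : Fin n} {z : QV n} (h : (qGame n a).E (.var k) z) :
    z = .val k z.bit := by
  cases z with
  | val k' b => exact congrArg (QV.val · b) h
  | _ => exact h.elim

theorem qGame_E_val (c : ℕ → Bool) {k : Fin n} {b : Bool} {z : QV n}
    (h : (qGame n a).E (.val k b) z) : z = qPlay n c (2 * k + 2) := by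
  cases z with
  | var k' =>
    have h : (k' : ℕ) = k + 1 := h
    rw [show 2 * (k : ℕ) + 2 = 2 * k' by omega, qPlay_two_mul c (h ▸ k'.isLt)]
  | val k' b' => exact h.elim
  | tgt =>
    have h : (k : ℕ) + 1 = n := h
    rw [eq_comm, qPlay_eq_tgt_iff]
    omega

theorem qGame_E_tgt {z : QV n} (h : (qGame n a).E .tgt z) : z = .tgt := by
  cases z with
  | tgt => rfl
  | _ => exact h.elim

theorem eq_qPlay_of_forall_edge (hpos : 0 < n) {ρ : ℕ → QV n} (h0 : ρ 0 = .var ⟨0, hpos⟩)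
    (hE : ∀ m, (qGame n a).E (ρ m) (ρ (m + 1))) :
    ρ = qPlay n fun k => (ρ (2 * k + 1)).bit := by
  funext m
  induction m with
  | zero => exact h0.trans (qPlay_two_mul _ hpos).symm
  | succ m ih =>
    have hm := hE m
    rw [ih] at hm
    by_cases ht : 2 * n ≤ m
    · rw [(qPlay_eq_tgt_iff _ _).2 ht] at hm
      rw [qGame_E_tgt hm, eq_comm, qPlay_eq_tgt_iff]
      omega
    obtain ⟨k, rfl | rfl⟩ := Nat.even_or_odd' m
    · rw [qPlay_two_mul _ (by omega : k < n)] at hm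
      rw [qPlay_two_mul_add_one _ (by omega : k < n)]
      exact qGame_E_var hm
    · rw [qPlay_two_mul_add_one _ (by omega : k < n)] at hm
      exact qGame_E_val _ hm

theorem exists_out_eq_qPlay (σ₁ : (qGame n a).Strat1) (σ₂ : (qGame n a).Strat2)
    (hpos : 0 < n) :
    ∃ c, (qGame n a).out σ₁ σ₂ (.var ⟨0, hpos⟩) = qPlay n c :=
  ⟨_, eq_qPlay_of_forall_edge hpos rfl (out_edge σ₁ σ₂ _)⟩

section Consistent

variable {σ₁ : (qGame n a).Strat1} {σ₂ : (qGame n a).Strat2} {hpos : 0 < n} {c : ℕ → Bool}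
  {k : ℕ}

theorem val_eq_strat1_of_out_eq (h : (qGame n a).out σ₁ σ₂ (.var ⟨0, hpos⟩) = qPlay n c)
    (hk : k < n) (he : k % 2 = 0) : QV.val ⟨k, hk⟩ (c k) = σ₁.1 (qHist n c k) (.var ⟨k, hk⟩) := by
  have := out_succ σ₁ σ₂ (.var ⟨0, hpos⟩) (2 * k)
  rwa [h, qPlay_two_mul_add_one _ hk, qPlay_two_mul _ hk,
    if_pos (qGame_var_mem_V1.2 he)] at this

theorem val_eq_strat2_of_out_eq (h : (qGame n a).out σ₁ σ₂ (.var ⟨0, hpos⟩) = qPlay n c)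
    (hk : k < n) (ho : k % 2 ≠ 0) : QV.val ⟨k, hk⟩ (c k) = σ₂.1 (qHist n c k) (.var ⟨k, hk⟩) := by
  have := out_succ σ₁ σ₂ (.var ⟨0, hpos⟩) (2 * k)
  rwa [h, qPlay_two_mul_add_one _ hk, qPlay_two_mul _ hk,
    if_neg (mt qGame_var_mem_V1.1 ho)] at this

end Consistent

noncomputable def bitStrat1 (g : List Bool → Bool) : (qGame n a).Strat1 :=
  Strat1.ofFun _ fun l => QV.move fun k => g (histBits l k)

noncomputable def bitStrat2 (c : ℕ → Bool) : (qGame n a).Strat2 :=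
  Strat2.ofFun _ fun _ => QV.move fun k => c k

theorem bitStrat1_var (g : List Bool → Bool) (l : List (QV n)) (k : Fin n) :
    (bitStrat1 (a := a) g).1 l (.var k) = .val k (g (histBits l k)) :=
  Strat1.ofFun_apply rfl

theorem bitStrat2_var (c : ℕ → Bool) (l : List (QV n)) (k : Fin n) :
    (bitStrat2 (a := a) c).1 l (.var k) = .val k (c k) :=
  Strat2.ofFun_apply rfl

noncomputable def bitStrategy (σ₁ : (qGame n a).Strat1) (L : List Bool) : Bool :=
  if h : L.length < n then
    (σ₁.1 (qHist n (fun j => L.getD j false) L.length) (.var ⟨L.length, h⟩)).bit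
  else false

theorem bitStrategy_map_range (σ₁ : (qGame n a).Strat1) (c : ℕ → Bool) {k : ℕ} (hk : k < n) :
    bitStrategy σ₁ ((List.range k).map c) = (σ₁.1 (qHist n c k) (.var ⟨k, hk⟩)).bit := by
  have h : qHist n (fun j => ((List.range k).map c).getD j false) k = qHist n c k :=
    qHist_congr fun i hi => by simp [hi]
  simp only [bitStrategy, List.length_map, List.length_range, dif_pos hk, h]

theorem follows_of_out_bitStrat1 {g : List Bool → Bool} {σ₂ : (qGame n a).Strat2}
    {hpos : 0 < n} {c : ℕ → Bool}
    (h : (qGame n a).out (bitStrat1 g) σ₂ (.var ⟨0, hpos⟩) = qPlay n c) :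
    Follows g c n := by
  intro k hk he
  have := val_eq_strat1_of_out_eq h hk he
  rw [bitStrat1_var, histBits_qHist _ hk.le] at this
  exact (QV.val.inj this).2

theorem out_bitStrat2 {σ₁ : (qGame n a).Strat1} {hpos : 0 < n} {c : ℕ → Bool}
    (hc : Follows (bitStrategy σ₁) c n) :
    (qGame n a).out σ₁ (bitStrat2 c) (.var ⟨0, hpos⟩) = qPlay n c := by
  obtain ⟨c', hc'⟩ := exists_out_eq_qPlay σ₁ (bitStrat2 c) hpos
  suffices ∀ i < n, c' i = c i by rw [hc', qPlay_congr this]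
  intro i
  induction i using Nat.strong_induction_on with
  | _ i ih =>
    intro hi
    have hpre : qHist n c' i = qHist n c i := qHist_congr fun j hj => ih j hj (by omega)
    by_cases he : i % 2 = 0
    · have := val_eq_strat1_of_out_eq hc' hi he
      rw [hc i hi he, bitStrategy_map_range σ₁ c hi, ← hpre, ← this]
      rfl
    · have := val_eq_strat2_of_out_eq hc' hi he
      rw [hpre, bitStrat2_var] at this
      exact (QV.val.inj this).2

theorem qGame_w_val (k : Fin n) (b : Bool) (z : QV n) (i : Fin 2) :
    (qGame n a).w (.val k b) z i = 0 := by
  cases z <;> rfl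

theorem cost_qPlay (c : ℕ → Bool) :
    (qGame n a).cost (qPlay n c) = fun i : Fin 2 => if (i : ℕ) = 0 then (chosenSum a c n : ℕ∞)
      else (chosenSum a (fun k => !c k) n : ℕ∞) := by
  have hF : ∀ m, qPlay n c m ∈ (qGame n a).F ↔ 2 * n ≤ m := qPlay_eq_tgt_iff c
  have hex : ∃ ℓ, qPlay n c ℓ ∈ (qGame n a).F := ⟨2 * n, (hF _).2 le_rfl⟩
  have hfind : Nat.find hex = 2 * n :=
    (Nat.find_eq_iff hex).2 ⟨(hF _).2 le_rfl, fun m hm => by rw [hF]; omega⟩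
  have hterm : ∀ i : Fin 2, ∀ k ∈ Finset.range n,
      ((qGame n a).w (qPlay n c (2 * k)) (qPlay n c (2 * k + 1)) i : ℕ∞) +
          (qGame n a).w (qPlay n c (2 * k + 1)) (qPlay n c (2 * k + 1 + 1)) i =
        if (i : ℕ) = 0 then ((if c k then a k else 0 : ℕ) : ℕ∞)
        else ((if !c k then a k else 0 : ℕ) : ℕ∞) := by
    intro i k hk
    have hk : k < n := Finset.mem_range.mp hk
    rw [qPlay_two_mul_add_one _ hk, qPlay_two_mul _ hk, qGame_w_val]
    fin_cases i <;> cases c k <;> simp [qGame]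
  funext i
  rw [MWGame.cost, dif_pos hex, hfind, Finset.sum_range_two_mul, Finset.sum_congr rfl (hterm i)]
  split_ifs <;> simp [chosenSum]

theorem leC_cost_qPlay_iff (c : ℕ → Bool) {T : ℕ} (hT : T ≤ ∑ i ∈ Finset.range n, a i) :
    leC ((qGame n a).cost (qPlay n c))
        (fun i => if (i : ℕ) = 0 then (T : ℕ∞)
          else (((∑ i ∈ Finset.range n, a i) - T : ℕ) : ℕ∞)) ↔
      chosenSum a c n = T := by
  have := chosenSum_add_chosenSum_not (a := a) c n
  rw [leC, cost_qPlay, Pi.le_def, Fin.forall_fin_two]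
  simp only [Fin.val_zero, Fin.val_one, if_true, one_ne_zero, if_false, Nat.cast_le]
  omega

end QGame

theorem stmt17_general (n : ℕ) (hpos : 0 < n) (a : ℕ → ℕ) (T : ℕ)
    (hT : T ≤ ∑ i ∈ Finset.range n, a i) :
    qss a T n n 0 ↔
      ∃ σ₁ : (qGame n a).Strat1, ∀ σ₂ : (qGame n a).Strat2,
        leC ((qGame n a).cost ((qGame n a).out σ₁ σ₂ (.var ⟨0, hpos⟩)))
          (fun i => if (i : ℕ) = 0 then (T : ℕ∞)
                    else (((∑ i ∈ Finset.range n, a i) - T : ℕ) : ℕ∞)) := by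
  rw [qss_iff_exists_forall_follows]
  constructor
  · rintro ⟨g, hg⟩
    refine ⟨bitStrat1 g, fun σ₂ => ?_⟩
    obtain ⟨c, hc⟩ := exists_out_eq_qPlay (bitStrat1 g) σ₂ hpos
    rw [hc, leC_cost_qPlay_iff c hT]
    exact hg c (follows_of_out_bitStrat1 hc)
  · rintro ⟨σ₁, hσ₁⟩
    refine ⟨bitStrategy σ₁, fun c hc => ?_⟩
    have := hσ₁ (bitStrat2 c)
    rwa [out_bitStrat2 hc, leC_cost_qPlay_iff c hT] at this

/-- Correctness of the reduction from Quantified Subset-Sum: `Ψ` is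
true iff Player 1 can ensure the cost profile `(T, Σᵢ aᵢ − T)` from `x₁` (w.r.t. the
componentwise order) in the associated 2-weighted reachability game. -/
theorem stmt17 (n : ℕ) (hn : Odd n) (hpos : 0 < n) (a : ℕ → ℕ) (T : ℕ)
    (hT : T ≤ ∑ i ∈ Finset.range n, a i) :
    qss a T n n 0 ↔
      ∃ σ₁ : (qGame n a).Strat1, ∀ σ₂ : (qGame n a).Strat2,
        leC ((qGame n a).cost ((qGame n a).out σ₁ σ₂ (.var ⟨0, hpos⟩)))
          (fun i => if (i : ℕ) = 0 then (T : ℕ∞)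
                    else (((∑ i ∈ Finset.range n, a i) - T : ℕ) : ℕ∞)) :=
  stmt17_general n hpos a T hT
end
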